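/- arXiv:1612.06298 — 4 statements merged into one kernel-verified Lean document; each statement's English description precedes it below -/
import Mathlib

section
/- Let (R, m) be a local ring such that for every n and every n-tuple f of polynomials in R[X₁,…,Xₙ] with f(0) ∈ mⁿ and Jacobian determinant J(0) a unit, there exists a unique a ∈ mⁿ with f(a) = 0. Then R is a Henselian local ring. -/
open MvPolynomial IsLocalRing

namespace MvPolynomial

variable {R σ : Type*} [CommRing R]

theorem eval_aeval_X_add_C (a : σ → R) (i : σ) (c : R) (p : Polynomial R) :
    eval a (Polynomial.aeval (X i + C c) p) = p.eval (a i + c) := by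
  change aeval a _ = _
  rw [← Polynomial.aeval_algHom_apply]
  simp [Polynomial.aeval_def]

theorem pderiv_aeval_X_add_C (i : σ) (c : R) (p : Polynomial R) :
    pderiv i (Polynomial.aeval (X i + C c) p) =
      Polynomial.aeval (X i + C c) (Polynomial.derivative p) := by
  classical
  rw [Derivation.map_aeval, map_add, pderiv_C, add_zero, pderiv_X_self, smul_eq_mul, mul_one]

end MvPolynomial

/-- a local ring satisfying the multivariate Hensel condition (H)
(with the discrete topology) for every `n` is a Henselian local ring. -/
theorem henselianLocalRing_of_mvHenselCondition
    (R : Type*) [CommRing R] [IsLocalRing R]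
    (H : ∀ n : ℕ, ∀ f : Fin n → MvPolynomial (Fin n) R,
      (∀ i, eval (0 : Fin n → R) (f i) ∈ maximalIdeal R) →
      IsUnit (Matrix.of fun i j => eval (0 : Fin n → R) (pderiv j (f i))).det →
      ∃! a : Fin n → R, (∀ i, a i ∈ maximalIdeal R) ∧ ∀ i, eval a (f i) = 0) :
    HenselianLocalRing R := by
  refine ⟨fun p _ a₀ hroot hsimple => ?_⟩
  -- Hensel's condition for `n = 1`, applied to `p (X + a₀)`.
  obtain ⟨a, ⟨ha_mem, ha_root⟩, -⟩ :=
    H 1 (fun _ => Polynomial.aeval (X 0 + C a₀) p)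
      (fun _ => by rwa [eval_aeval_X_add_C, Pi.zero_apply, zero_add])
      (by
        rwa [Matrix.det_unique, Matrix.of_apply, Subsingleton.elim default (0 : Fin 1),
          pderiv_aeval_X_add_C, eval_aeval_X_add_C, Pi.zero_apply, zero_add])
  refine ⟨a 0 + a₀, ?_, by rw [add_sub_cancel_right]; exact ha_mem 0⟩
  exact (eval_aeval_X_add_C a 0 a₀ p).symm.trans (ha_root 0)
end

section
/- Let (R, m) be a Henselian local ring satisfying the multivariate Hensel condition, and let f be an n-tuple of polynomials in R[X₁,…,Xₙ] with f(0) ∈ mⁿ and Jacobian determinant J(0) ∈ R^×. Then the bijection f : mⁿ → mⁿ is a homeomorphism in the m-adic topology: for every k ≥ 1, x ≡ x' mod (m^k)ⁿ if and only if f(x) ≡ f(x') mod (m^k)ⁿ, for x, x' ∈ mⁿ. -/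
/-!
A first-order expansion of each `fᵢ` at `x'` gives `f(x) - f(x') = A (x - x')` for a matrix `A`
congruent modulo `m` to the Jacobian at `x'`, hence to the Jacobian at `0`. So `det A` is a unit,
`A` is invertible over `R`, and each of `x - x'`, `f(x) - f(x')` lies in `(m^k)ⁿ` as soon as the
other does.
-/

open MvPolynomial IsLocalRing

namespace MvPolynomial

variable {R σ : Type*} [CommRing R]

theorem eval_sub_eval_mem_of_forall_sub_mem {I : Ideal R} (p : MvPolynomial σ R) {x y : σ → R}
    (h : ∀ j, x j - y j ∈ I) : eval x p - eval y p ∈ I := by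
  rw [← Ideal.Quotient.mk_eq_mk_iff_sub_mem, eval, coe_eval₂Hom, eval₂_comp_left, eval,
    coe_eval₂Hom, eval₂_comp_left]
  congr 1
  funext j
  exact (Ideal.Quotient.mk_eq_mk_iff_sub_mem _ _).mpr (h j)

theorem exists_eval_sub_eval_eq_dotProduct [Fintype σ] {I : Ideal R} (p : MvPolynomial σ R)
    {x y : σ → R} (h : ∀ j, x j - y j ∈ I) :
    ∃ c : σ → R, eval x p - eval y p = c ⬝ᵥ (x - y) ∧ ∀ j, c j - eval y (pderiv j p) ∈ I := by
  classical
  induction p using MvPolynomial.induction_on with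
  | C a => exact ⟨0, by simp, by simp⟩
  | add p q hp hq =>
    obtain ⟨c, hc, hc'⟩ := hp
    obtain ⟨d, hd, hd'⟩ := hq
    refine ⟨c + d, ?_, fun j => ?_⟩
    · rw [add_dotProduct, ← hc, ← hd, map_add, map_add]
      ring
    · simpa only [map_add, Pi.add_apply, add_sub_add_comm] using add_mem (hc' j) (hd' j)
  | mul_X p i hp =>
    obtain ⟨c, hc, hc'⟩ := hp
    refine ⟨y i • c + eval x p • (Pi.single i 1 : σ → R), ?_, fun j => ?_⟩
    · rw [add_dotProduct, smul_dotProduct, smul_dotProduct, single_one_dotProduct, ← hc]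
      simp only [eval_mul, eval_X, Pi.sub_apply, smul_eq_mul]
      ring
    · have key :
          (y i • c + eval x p • (Pi.single i 1 : σ → R)) j - eval y (pderiv j (p * X i)) =
            y i * (c j - eval y (pderiv j p)) +
              (Pi.single i 1 : σ → R) j * (eval x p - eval y p) := by
        rcases eq_or_ne j i with rfl | hji
        · simp only [Pi.add_apply, Pi.smul_apply, smul_eq_mul, Pi.single_eq_same,
            Derivation.leibniz, pderiv_X, map_add, map_mul, eval_X, map_one]
          ring
        · simp only [Pi.add_apply, Pi.smul_apply, smul_eq_mul, Pi.single_eq_of_ne hji,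
            Derivation.leibniz, pderiv_X, Pi.single_eq_of_ne' hji, map_add, map_mul, eval_X,
            map_zero]
          ring
      rw [key]
      exact add_mem (I.mul_mem_left _ (hc' j))
        (I.mul_mem_left _ (eval_sub_eval_mem_of_forall_sub_mem p h))

end MvPolynomial

namespace Matrix

variable {R n : Type*} [CommRing R] [Fintype n] [DecidableEq n]

theorem forall_mem_of_forall_mulVec_mem {I : Ideal R} {A : Matrix n n R} (hA : IsUnit A.det)
    {v : n → R} (h : ∀ i, (A *ᵥ v) i ∈ I) (i : n) : v i ∈ I := by
  rw [← one_mulVec v, ← nonsing_inv_mul A hA, ← mulVec_mulVec]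
  exact I.sum_mem fun j _ => I.mul_mem_left _ (h j)

theorem isUnit_det_of_forall_sub_mem_maximalIdeal [IsLocalRing R] {A B : Matrix n n R}
    (h : ∀ i j, A i j - B i j ∈ maximalIdeal R) (hB : IsUnit B.det) : IsUnit A.det := by
  have : (residue R).mapMatrix A = (residue R).mapMatrix B :=
    ext fun i j => (Ideal.Quotient.mk_eq_mk_iff_sub_mem _ _).mpr (h i j)
  rw [← residue_ne_zero_iff_isUnit, RingHom.map_det, this, ← RingHom.map_det]
  exact (residue_ne_zero_iff_isUnit _).mpr hB

end Matrix

theorem henselian_polynomial_map_adic_homeomorph_general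
    {R : Type*} [CommRing R] [HenselianLocalRing R] {n : ℕ}
    (f : Fin n → MvPolynomial (Fin n) R)
    (hJ : IsUnit (Matrix.of fun i j => eval (0 : Fin n → R) (pderiv j (f i))).det) :
    ∀ k : ℕ, 1 ≤ k → ∀ x x' : Fin n → R,
      (∀ i, x i ∈ maximalIdeal R) → (∀ i, x' i ∈ maximalIdeal R) →
      ((∀ i, x i - x' i ∈ (maximalIdeal R) ^ k) ↔
        (∀ i, eval x (f i) - eval x' (f i) ∈ (maximalIdeal R) ^ k)) := by
  intro k _ x x' hx hx'
  refine ⟨fun h i => eval_sub_eval_mem_of_forall_sub_mem (f i) h, fun h => ?_⟩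
  choose c hc hc_pderiv using fun i =>
    exists_eval_sub_eval_eq_dotProduct (f i) fun j => sub_mem (hx j) (hx' j)
  have hx'_zero : ∀ j, x' j - (0 : Fin n → R) j ∈ maximalIdeal R := by simpa using hx'
  have hc_zero : ∀ i j, c i j - eval 0 (pderiv j (f i)) ∈ maximalIdeal R := fun i j => by
    simpa only [sub_add_sub_cancel] using
      add_mem (hc_pderiv i j) (eval_sub_eval_mem_of_forall_sub_mem (pderiv j (f i)) hx'_zero)
  have hc_unit : IsUnit (Matrix.of c).det :=
    Matrix.isUnit_det_of_forall_sub_mem_maximalIdeal hc_zero hJ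
  exact Matrix.forall_mem_of_forall_mulVec_mem hc_unit (v := x - x') fun i =>
    show c i ⬝ᵥ (x - x') ∈ _ from hc i ▸ h i

/-- over a Henselian local ring, for `f` with `f(0) ∈ mⁿ` and unit
Jacobian determinant at `0`, the bijection `f : mⁿ → mⁿ` is a homeomorphism in
the `m`-adic topology: for every `k ≥ 1` and `x, x' ∈ mⁿ`,
`x ≡ x' mod (m^k)ⁿ` iff `f(x) ≡ f(x') mod (m^k)ⁿ`. -/
theorem henselian_polynomial_map_adic_homeomorph
    {R : Type*} [CommRing R] [HenselianLocalRing R] {n : ℕ}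
    (f : Fin n → MvPolynomial (Fin n) R)
    (hf0 : ∀ i, eval (0 : Fin n → R) (f i) ∈ maximalIdeal R)
    (hJ : IsUnit (Matrix.of fun i j => eval (0 : Fin n → R) (pderiv j (f i))).det) :
    ∀ k : ℕ, 1 ≤ k → ∀ x x' : Fin n → R,
      (∀ i, x i ∈ maximalIdeal R) → (∀ i, x' i ∈ maximalIdeal R) →
      ((∀ i, x i - x' i ∈ (maximalIdeal R) ^ k) ↔
        (∀ i, eval x (f i) - eval x' (f i) ∈ (maximalIdeal R) ^ k)) :=
  henselian_polynomial_map_adic_homeomorph_general f hJ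
end

section
/- Let R be a complete linearly topologized Hausdorff commutative ring and m a closed ideal all of whose elements are topologically nilpotent. Let f = (f₁,…,fₙ) be restricted power series in R{X₁,…,Xₙ} with f(0) ∈ mⁿ and Jacobian determinant J(0) a unit of R. Then there exists a unique a ∈ mⁿ with f(a) = 0. -/
/-!
Newton's method with the Jacobian frozen at the origin. Let `L` be the Jacobian matrix of `f`
at `0` and write `(x, h)` for the ideal generated by the coordinates of `x` and `h`. Monomial by
monomial, a restricted series satisfies the Taylor estimate
`f(x + h) - f(x) - L h ∈ closure((x, h) * (h))`.

Let `N` be the ideal generated by the `fᵢ(0)`; being finitely generated by topologically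
nilpotent elements, its powers tend to `0` (powers of `m` itself need not). The iteration
`a₀ = 0`, `aₖ₊₁ = aₖ - L⁻¹ f(aₖ)` keeps `aₖ` in the closure of `N` and `f(aₖ)` in the closure of
`Nᵏ⁺¹`, so it converges to a zero in `mⁿ`. If `y` and `z = y + d` are zeros in `mⁿ`, the estimate
gives `(d) ≤ closure(Q * (d))` for the finitely generated ideal `Q = (y, d) ≤ m`, hence
`(d) ≤ closure(Qᵏ)` for every `k`, and `d = 0`.
-/

open Filter Topology MvPowerSeries Matrix

namespace Ideal

variable {R : Type*} [CommRing R] [TopologicalSpace R] [IsTopologicalRing R]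

theorem le_closure (J : Ideal R) : J ≤ J.closure := fun _ hx => subset_closure hx

theorem closure_mono {J K : Ideal R} (h : J ≤ K) : J.closure ≤ K.closure :=
  fun _ hx => _root_.closure_mono h hx

theorem closure_le_closure_of_le_closure {J K : Ideal R} (h : J ≤ K.closure) :
    J.closure ≤ K.closure :=
  fun _ hx => closure_minimal h isClosed_closure hx

theorem closure_mul_closure_le (J K : Ideal R) : J.closure * K.closure ≤ (J * K).closure :=
  Submodule.mul_le.mpr fun _ hx _ hy =>
    map_mem_closure₂ continuous_mul hx hy fun _ ha _ hb => mul_mem_mul ha hb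

theorem closure_le_of_le_of_mem_nhds {J I : Ideal R} (hI : (I : Set R) ∈ 𝓝 0) (h : J ≤ I) :
    J.closure ≤ I :=
  fun _ hx => closure_minimal h
    (I.toAddSubgroup.isClosed_of_isOpen (I.toAddSubgroup.isOpen_of_mem_nhds hI)) hx

theorem le_closure_pow_mul_of_le_closure_mul {Q D : Ideal R} (h : D ≤ (Q * D).closure) (k : ℕ) :
    D ≤ (Q ^ k * D).closure := by
  induction k with
  | zero => simpa using D.le_closure
  | succ k ih =>
    refine h.trans (closure_le_closure_of_le_closure ?_)
    calc Q * D ≤ Q.closure * (Q ^ k * D).closure := mul_mono Q.le_closure ih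
      _ ≤ (Q ^ (k + 1) * D).closure := by
        rw [pow_succ', mul_assoc]; exact closure_mul_closure_le _ _

end Ideal

theorem HasSum.mem_closure_ideal {R ι : Type*} [CommRing R] [TopologicalSpace R]
    [IsTopologicalRing R] {g : ι → R} {s : R} (hs : HasSum g s) {J : Ideal R}
    (hg : ∀ i, g i ∈ J) : s ∈ J.closure :=
  mem_closure_of_tendsto hs (Eventually.of_forall fun _ => J.sum_mem fun i _ => hg i)

theorem Ideal.FG.eventually_pow_le {R : Type*} [CommRing R] [TopologicalSpace R] {Q : Ideal R}
    (hQ : Q.FG) (hnil : ∀ x ∈ Q, IsTopologicallyNilpotent x) {I : Ideal R} (hI : (I : Set R) ∈ 𝓝 0) :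
    ∀ᶠ k in atTop, Q ^ k ≤ I := by
  obtain ⟨k, hk⟩ := Ideal.exists_pow_le_of_le_radical_of_fg
    (fun x hx => (hnil x hx).exists_pow_mem_of_mem_nhds hI) hQ
  exact eventually_atTop.mpr ⟨k, fun l hl => (Ideal.pow_le_pow_right hl).trans hk⟩

namespace IsLinearTopology

variable {R : Type*} [CommRing R] [TopologicalSpace R] [IsTopologicalRing R]
  [IsLinearTopology R R]

instance nonarchimedeanAddGroup : NonarchimedeanAddGroup R where
  is_nonarchimedean _ hU := by
    obtain ⟨I, hI, hIU⟩ := hasBasis_ideal.mem_iff.mp hU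
    exact ⟨⟨I.toAddSubgroup, I.toAddSubgroup.isOpen_of_mem_nhds hI⟩, hIU⟩

theorem tendsto_zero_of_mem_closure_pow {Q : Ideal R} (hQ : Q.FG)
    (hnil : ∀ x ∈ Q, IsTopologicallyNilpotent x) {x : ℕ → R}
    (hx : ∀ k, x k ∈ (Q ^ k).closure) : Tendsto x atTop (𝓝 0) :=
  hasBasis_ideal.tendsto_right_iff.mpr fun _ hI =>
    (hQ.eventually_pow_le hnil hI).mono fun k hk => Ideal.closure_le_of_le_of_mem_nhds hI hk (hx k)

theorem eq_zero_of_forall_mem_closure_pow [T2Space R] {Q : Ideal R} (hQ : Q.FG)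
    (hnil : ∀ x ∈ Q, IsTopologicallyNilpotent x) {x : R}
    (hx : ∀ k, x ∈ (Q ^ k).closure) : x = 0 :=
  tendsto_nhds_unique tendsto_const_nhds (tendsto_zero_of_mem_closure_pow hQ hnil hx)

theorem tendsto_zero_of_mem_closure_span {α σ : Type*} [Finite σ] {l : Filter α}
    {h : α → σ → R} (hh : Tendsto h l (𝓝 0)) {y : α → R}
    (hy : ∀ a, y a ∈ (Ideal.span (Set.range (h a))).closure) : Tendsto y l (𝓝 0) := by
  refine hasBasis_ideal.tendsto_right_iff.mpr fun I hI => ?_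
  have hhI : ∀ᶠ a in l, ∀ j, h a j ∈ I :=
    eventually_all.mpr fun j => (tendsto_pi_nhds.mp hh j).eventually_mem hI
  exact hhI.mono fun a ha => Ideal.closure_le_of_le_of_mem_nhds hI
    (Ideal.span_le.mpr (Set.range_subset_iff.mpr ha)) (hy a)

end IsLinearTopology

section Monomial

theorem Finsupp.exists_eq_add_single {σ : Type*} {d : σ →₀ ℕ} (hd : d ≠ 0) :
    ∃ d' j, d = d' + Finsupp.single j 1 := by
  obtain ⟨j, hj⟩ := Finsupp.ne_iff.mp hd
  exact ⟨d - Finsupp.single j 1, j,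
    (tsub_add_cancel_of_le (Finsupp.single_le_iff.mpr (Nat.one_le_iff_ne_zero.mpr hj))).symm⟩

variable {R σ : Type*} [CommRing R] [Fintype σ]

theorem prod_pow_add_single [DecidableEq σ] (y : σ → R) (d : σ →₀ ℕ) (j : σ) :
    ∏ i, y i ^ (d + Finsupp.single j 1 : σ →₀ ℕ) i = y j * ∏ i, y i ^ d i := by
  simp only [Finsupp.add_apply, pow_add, Finset.prod_mul_distrib, Finsupp.single_apply, pow_ite,
    pow_one, pow_zero, Finset.prod_ite_eq, Finset.mem_univ, if_true, mul_comm]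

theorem prod_pow_mem_span_range (y : σ → R) {d : σ →₀ ℕ} (hd : d ≠ 0) :
    ∏ i, y i ^ d i ∈ Ideal.span (Set.range y) := by
  obtain ⟨j, hj⟩ := Finsupp.ne_iff.mp hd
  exact Ideal.mem_of_dvd _ (Finset.dvd_prod_of_mem _ (Finset.mem_univ j))
    (Ideal.pow_mem_of_mem _ (Ideal.subset_span (Set.mem_range_self j)) _ (Nat.pos_of_ne_zero hj))

theorem prod_pow_add_sub_prod_pow_mem_span (x h : σ → R) (d : σ →₀ ℕ) :
    ∏ i, (x i + h i) ^ d i - ∏ i, x i ^ d i ∈ Ideal.span (Set.range h) := by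
  have hh : ∀ j, Ideal.Quotient.mk (Ideal.span (Set.range h)) (h j) = 0 := fun j =>
    Ideal.Quotient.eq_zero_iff_mem.mpr (Ideal.subset_span (Set.mem_range_self j))
  rw [← Ideal.Quotient.eq]
  simp [map_prod, hh]

theorem prod_pow_add_sub_prod_pow_sub_linear_mem [DecidableEq σ] (x h : σ → R) (d : σ →₀ ℕ) :
    ∏ i, (x i + h i) ^ d i - ∏ i, x i ^ d i - ∑ j, (if d = Finsupp.single j 1 then h j else 0) ∈
      (Ideal.span (Set.range x) ⊔ Ideal.span (Set.range h)) * Ideal.span (Set.range h) := by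
  rcases eq_or_ne d 0 with rfl | hd
  · simp [eq_comm (a := (0 : σ →₀ ℕ))]
  obtain ⟨d, j, rfl⟩ := Finsupp.exists_eq_add_single hd
  rw [prod_pow_add_single, prod_pow_add_single]
  rcases eq_or_ne d 0 with rfl | hd'
  · simp [Finsupp.single_left_inj]
  have hlin : ∀ k, d + Finsupp.single j 1 ≠ Finsupp.single k 1 := fun k he => hd' <| by
    simpa [Finsupp.degree_eq_zero_iff] using congrArg Finsupp.degree he
  simp only [hlin, if_false, Finset.sum_const_zero, sub_zero]
  have hxh : Ideal.span (Set.range fun i => x i + h i) ≤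
      Ideal.span (Set.range x) ⊔ Ideal.span (Set.range h) :=
    Ideal.span_le.mpr (Set.range_subset_iff.mpr fun i =>
      add_mem (Ideal.mem_sup_left (Ideal.subset_span (Set.mem_range_self i)))
        (Ideal.mem_sup_right (Ideal.subset_span (Set.mem_range_self i))))
  rw [show ∀ a b c e : R, (a + b) * c - a * e = c * b + a * (c - e) by intros; ring]
  exact add_mem
    (Ideal.mul_mem_mul (hxh (prod_pow_mem_span_range _ hd'))
      (Ideal.subset_span (Set.mem_range_self j)))
    (Ideal.mul_mem_mul (Ideal.mem_sup_left (Ideal.subset_span (Set.mem_range_self j)))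
      (prod_pow_add_sub_prod_pow_mem_span x h d))

end Monomial

namespace MvPowerSeries

variable {R σ : Type*} [CommRing R] [Fintype σ]

theorem summable_coeff_mul_prod_pow [UniformSpace R] [IsUniformAddGroup R] [CompleteSpace R]
    [IsTopologicalRing R] [IsLinearTopology R R] {f : MvPowerSeries σ R}
    (hf : Tendsto (fun d => coeff d f) cofinite (𝓝 0)) (x : σ → R) :
    Summable fun d : σ →₀ ℕ => coeff d f * ∏ i, x i ^ d i :=
  NonarchimedeanAddGroup.summable_of_tendsto_cofinite_zero
    (IsLinearTopology.tendsto_mul_zero_of_left _ _ hf)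

variable [TopologicalSpace R]

theorem hasSum_coeff_mul_prod_zero_pow (f : MvPowerSeries σ R) :
    HasSum (fun d : σ →₀ ℕ => coeff d f * ∏ i, (0 : σ → R) i ^ d i) (constantCoeff f) := by
  convert hasSum_single (0 : σ →₀ ℕ) fun d hd => ?_ using 1
  · simp
  obtain ⟨j, hj⟩ := Finsupp.ne_iff.mp hd
  rw [Finset.prod_eq_zero (Finset.mem_univ j) (zero_pow (by simpa using hj)), mul_zero]

theorem hasSum_coeff_mul_linear [ContinuousAdd R] [DecidableEq σ] (f : MvPowerSeries σ R)
    (h : σ → R) :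
    HasSum (fun d => coeff d f * ∑ j, if d = Finsupp.single j 1 then h j else 0)
      (∑ j, coeff (Finsupp.single j 1) f * h j) := by
  simp_rw [Finset.mul_sum, mul_ite, mul_zero]
  exact hasSum_sum fun j _ => by
    simpa using hasSum_single (Finsupp.single j 1) fun d hd => if_neg hd

theorem sub_sub_linear_mem_closure_of_hasSum [IsTopologicalRing R] (f : MvPowerSeries σ R)
    {x h : σ → R} {u v : R} (hu : HasSum (fun d => coeff d f * ∏ i, (x i + h i) ^ d i) u)
    (hv : HasSum (fun d => coeff d f * ∏ i, x i ^ d i) v) :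
    u - v - ∑ j, coeff (Finsupp.single j 1) f * h j ∈
      ((Ideal.span (Set.range x) ⊔ Ideal.span (Set.range h)) *
        Ideal.span (Set.range h)).closure := by
  classical
  refine ((hu.sub hv).sub (hasSum_coeff_mul_linear f h)).mem_closure_ideal fun d => ?_
  simp only [← mul_sub]
  exact Ideal.mul_mem_left _ _ (prod_pow_add_sub_prod_pow_sub_linear_mem x h d)

end MvPowerSeries

theorem Matrix.mulVec_apply_mem {R ι σ : Type*} [CommRing R] [Fintype σ] {J : Ideal R}
    (A : Matrix ι σ R) {v : σ → R} (hv : ∀ j, v j ∈ J) (i : ι) : (A *ᵥ v) i ∈ J :=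
  J.sum_mem fun j _ => J.mul_mem_left _ (hv j)

section Newton

variable {R σ : Type*} [CommRing R] [Fintype σ]

/-- `L` serves as the linear part of `F` at every point `x`, not just at `0`; the price is the
error ideal `(x, h) * (h)` instead of `(h) ^ 2`. -/
def HasTaylorBound [TopologicalSpace R] [IsTopologicalRing R]
    (F : (σ → R) → σ → R) (L : Matrix σ σ R) : Prop :=
  ∀ x h i, F (x + h) i - F x i - (L *ᵥ h) i ∈
    ((Ideal.span (Set.range x) ⊔ Ideal.span (Set.range h)) * Ideal.span (Set.range h)).closure

namespace HasTaylorBound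

variable [TopologicalSpace R] [IsTopologicalRing R] {F : (σ → R) → σ → R} {L : Matrix σ σ R}

theorem sub_mem_closure_span (hF : HasTaylorBound F L) (x y : σ → R) (i : σ) :
    F y i - F x i ∈ (Ideal.span (Set.range (y - x))).closure := by
  have hrem := Ideal.closure_mono Ideal.mul_le_right (hF x (y - x) i)
  have hlin := Ideal.le_closure _
    (mulVec_apply_mem (v := y - x) L (fun j => Ideal.subset_span (Set.mem_range_self j)) i)
  simpa using add_mem hrem hlin

theorem newton_step [DecidableEq σ] (hF : HasTaylorBound F L) {M : Matrix σ σ R} (hLM : L * M = 1)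
    {J K : Ideal R} (hKJ : K ≤ J) {x : σ → R} (hx : ∀ i, x i ∈ J.closure)
    (hFx : ∀ i, F x i ∈ K.closure) :
    (∀ i, (x - M *ᵥ F x) i ∈ J.closure) ∧ ∀ i, F (x - M *ᵥ F x) i ∈ (J * K).closure := by
  set h := -(M *ᵥ F x)
  have hh : ∀ i, h i ∈ K.closure := fun i => neg_mem (mulVec_apply_mem M hFx i)
  have hLh : L *ᵥ h = -F x := by
    rw [mulVec_neg, mulVec_mulVec, hLM, one_mulVec]
  have hxh : Ideal.span (Set.range x) ⊔ Ideal.span (Set.range h) ≤ J.closure :=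
    sup_le (Ideal.span_le.mpr (Set.range_subset_iff.mpr hx))
      (Ideal.span_le.mpr (Set.range_subset_iff.mpr fun i => Ideal.closure_mono hKJ (hh i)))
  rw [sub_eq_add_neg]
  refine ⟨fun i => add_mem (hx i) (Ideal.closure_mono hKJ (hh i)), fun i => ?_⟩
  have hrem := hF x h i
  rw [hLh, Pi.neg_apply, sub_neg_eq_add, sub_add_cancel] at hrem
  exact Ideal.closure_le_closure_of_le_closure ((Ideal.mul_mono hxh
    (Ideal.span_le.mpr (Set.range_subset_iff.mpr hh))).trans (Ideal.closure_mul_closure_le J K))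
    hrem

theorem eq_of_apply_eq [DecidableEq σ] [T2Space R] [IsLinearTopology R R] (hF : HasTaylorBound F L)
    {M : Matrix σ σ R} (hML : M * L = 1) {m : Ideal R}
    (hnil : ∀ x ∈ m, IsTopologicallyNilpotent x) {y z : σ → R} (hy : ∀ i, y i ∈ m)
    (hz : ∀ i, z i ∈ m) (hyz : F y = F z) : y = z := by
  set d := z - y
  set D := Ideal.span (Set.range d)
  set Q := Ideal.span (Set.range y) ⊔ D
  have hQfg : Q.FG := (Submodule.fg_span (Set.finite_range _)).sup
    (Submodule.fg_span (Set.finite_range _))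
  have hQm : Q ≤ m := sup_le (Ideal.span_le.mpr (Set.range_subset_iff.mpr hy))
    (Ideal.span_le.mpr (Set.range_subset_iff.mpr fun i => sub_mem (hz i) (hy i)))
  have hLd : ∀ i, (L *ᵥ d) i ∈ (Q * D).closure := fun i => by
    have hrem := hF y d i
    rwa [show y + d = z from add_sub_cancel y z, hyz, sub_self, zero_sub, neg_mem_iff] at hrem
  have hD : D ≤ (Q * D).closure := Ideal.span_le.mpr (Set.range_subset_iff.mpr fun i => by
    simpa only [mulVec_mulVec, hML, one_mulVec, SetLike.mem_coe] using mulVec_apply_mem M hLd i)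
  have hd : d = 0 := funext fun i =>
    IsLinearTopology.eq_zero_of_forall_mem_closure_pow hQfg (fun x hx => hnil x (hQm hx))
      fun k => Ideal.closure_mono Ideal.mul_le_left
        (Ideal.le_closure_pow_mul_of_le_closure_mul hD k (Ideal.subset_span (Set.mem_range_self i)))
  exact (sub_eq_zero.mp hd).symm

end HasTaylorBound

theorem HasTaylorBound.exists_zero [DecidableEq σ] [UniformSpace R] [IsUniformAddGroup R]
    [T2Space R] [CompleteSpace R] [IsTopologicalRing R] [IsLinearTopology R R] {F : (σ → R) → σ → R} {L M : Matrix σ σ R}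
    (hF : HasTaylorBound F L) (hLM : L * M = 1) {m : Ideal R} (hm : IsClosed (m : Set R))
    (hnil : ∀ x ∈ m, IsTopologicallyNilpotent x) (hF0 : ∀ i, F 0 i ∈ m) :
    ∃ a, (∀ i, a i ∈ m) ∧ F a = 0 := by
  set N := Ideal.span (Set.range (F 0))
  have hNfg : N.FG := Submodule.fg_span (Set.finite_range _)
  have hNm : N ≤ m := Ideal.span_le.mpr (Set.range_subset_iff.mpr hF0)
  have hNnil : ∀ x ∈ N, IsTopologicallyNilpotent x := fun x hx => hnil x (hNm hx)
  have hNanti : ∀ k, (N ^ (k + 1)).closure ≤ (N ^ k).closure := fun k =>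
    Ideal.closure_mono (Ideal.pow_le_pow_right k.le_succ)
  set a : ℕ → σ → R := fun k => (fun x => x - M *ᵥ F x)^[k] 0
  have ha : ∀ k, (∀ i, a k i ∈ N.closure) ∧ ∀ i, F (a k) i ∈ (N ^ (k + 1)).closure := by
    intro k
    induction k with
    | zero => exact ⟨fun i => by simp [a], fun i => by
        simpa [a] using N.le_closure (Ideal.subset_span (Set.mem_range_self i))⟩
    | succ k ih =>
      simp only [a, Function.iterate_succ_apply']
      rw [pow_succ']
      exact hF.newton_step hLM (Ideal.pow_le_self k.succ_ne_zero) ih.1 ih.2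
  have hinc : ∀ k i, a (k + 1) i - a k i ∈ (N ^ k).closure := fun k i => by
    simpa [a, Function.iterate_succ_apply'] using
      hNanti k (neg_mem (mulVec_apply_mem M (ha k).2 i))
  choose b hb using fun i => cauchySeq_tendsto_of_complete
    (NonarchimedeanAddGroup.cauchySeq_of_tendsto_sub_nhds_zero (f := fun k => a k i)
    (IsLinearTopology.tendsto_zero_of_mem_closure_pow hNfg hNnil (fun k => hinc k i)))
  refine ⟨b, fun i => hm.mem_of_tendsto (hb i)
    (Eventually.of_forall fun k => closure_minimal hNm hm ((ha k).1 i)), funext fun i => ?_⟩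
  have hFa : Tendsto (fun k => F (a k) i) atTop (𝓝 0) :=
    IsLinearTopology.tendsto_zero_of_mem_closure_pow hNfg hNnil fun k => hNanti k ((ha k).2 i)
  have hFb : Tendsto (fun k => F b i - F (a k) i) atTop (𝓝 0) :=
    IsLinearTopology.tendsto_zero_of_mem_closure_span
      (by simpa using (tendsto_const_nhds (x := b)).sub (tendsto_pi_nhds.mpr hb))
      fun k => hF.sub_mem_closure_span (a k) b i
  have hconst : Tendsto (fun _ : ℕ => F b i) atTop (𝓝 0) := by simpa using hFa.add hFb
  exact tendsto_nhds_unique tendsto_const_nhds hconst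

end Newton

/-- multivariate Hensel lemma for restricted power series
(Bourbaki). Let `R` be a complete Hausdorff linearly topologized commutative
ring and `m` a closed ideal of topologically nilpotent elements. If
`f = (f₁,…,fₙ)` are restricted power series (coefficients tending to `0`) with
`f(0) ∈ mⁿ` and Jacobian determinant at `0` a unit (the Jacobian matrix at `0`
is the matrix of coefficients of the linear terms), then `f` has a unique zero
`a ∈ mⁿ`, where `fᵢ(a)` is the (convergent) sum of the evaluated monomials. -/
theorem mv_hensel_restricted_power_series
    {R : Type*} [CommRing R] [UniformSpace R] [IsUniformAddGroup R]
    [IsTopologicalRing R] [T2Space R] [CompleteSpace R]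
    (hlin : ∀ U ∈ nhds (0 : R), ∃ I : Ideal R, (I : Set R) ⊆ U ∧ (I : Set R) ∈ nhds (0 : R))
    (m : Ideal R) (hm : IsClosed (m : Set R))
    (hnilp : ∀ x ∈ m, Tendsto (fun k : ℕ => x ^ k) atTop (nhds 0))
    {n : ℕ} (f : Fin n → MvPowerSeries (Fin n) R)
    (hrestricted : ∀ i, Tendsto (fun d : (Fin n →₀ ℕ) => coeff d (f i)) cofinite (nhds 0))
    (hf0 : ∀ i, constantCoeff (f i) ∈ m)
    (hJ : IsUnit (Matrix.of fun i j => coeff (Finsupp.single j 1) (f i)).det) :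
    ∃! a : Fin n → R, (∀ i, a i ∈ m) ∧
      ∀ i, HasSum (fun d : (Fin n →₀ ℕ) => coeff d (f i) * ∏ j, a j ^ d j) 0 := by
  have : IsLinearTopology R R := isLinearTopology_iff_hasBasis_ideal.mpr
    ⟨fun U => ⟨fun hU => (hlin U hU).imp fun _ hI => hI.symm, fun ⟨_, hI, hIU⟩ =>
      mem_of_superset hI hIU⟩⟩
  set L : Matrix (Fin n) (Fin n) R := Matrix.of fun i j => coeff (Finsupp.single j 1) (f i)
  set F : (Fin n → R) → Fin n → R := fun x i => ∑' d : Fin n →₀ ℕ, coeff d (f i) * ∏ j, x j ^ d j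
  have hF : ∀ x i, HasSum (fun d : Fin n →₀ ℕ => coeff d (f i) * ∏ j, x j ^ d j) (F x i) :=
    fun x i => (summable_coeff_mul_prod_pow (hrestricted i) x).hasSum
  have hTaylor : HasTaylorBound F L := fun x h i =>
    sub_sub_linear_mem_closure_of_hasSum (f i) (hF (x + h) i) (hF x i)
  have hF0 : ∀ i, F 0 i ∈ m := fun i =>
    ((hF 0 i).unique (hasSum_coeff_mul_prod_zero_pow (f i))).symm ▸ hf0 i
  obtain ⟨a, ham, hFa⟩ := hTaylor.exists_zero (mul_nonsing_inv L hJ) hm hnilp hF0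
  refine ⟨a, ⟨ham, fun i => by simpa only [hFa, Pi.zero_apply] using hF a i⟩, fun y ⟨hym, hy⟩ => ?_⟩
  refine hTaylor.eq_of_apply_eq (nonsing_inv_mul L hJ) hnilp hym ham (funext fun i => ?_)
  rw [hFa]
  exact (hF y i).unique (hy i)
end

section
/- Let (R, m) be a Henselian local domain, f an n-tuple of polynomials over R with f(0) = 0 and Jacobian determinant e := J(0) ≠ 0, and let N = adj(M(0)) where M(0) is the Jacobian matrix at 0. Write f(eX) = e·M(0)·X + e²·g(X) with g having only monomials of degree ≥ 2. Then for every b ∈ mⁿ, setting h(X) = X + N·g(X), the element x = e·h⁻¹(N·b) ∈ e·mⁿ satisfies f(x) = e²·b, where h⁻¹ denotes the inverse of h : mⁿ → mⁿ given by the multivariate Hensel lemma. -/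
open MvPolynomial IsLocalRing
open Matrix

/-!
Writing `M` for the Jacobian matrix at `0`, so that `N = adj M` and `M * N = e • 1`: evaluating
`h(c) = N b` gives `c = N (b - g(c))`, hence `M c = e (b - g(c))`. Evaluating the identity
`f(eX) = e M X + e² g(X)` at `c` then gives `f(ec) = e² (b - g(c)) + e² g(c) = e² b`.
-/

namespace MvPolynomial

variable {R σ : Type*} [CommSemiring R]

theorem eval_aeval_C_mul_X (e : R) (c : σ → R) (p : MvPolynomial σ R) :
    eval c (aeval (fun j => C e * X j) p) = eval (fun j => e * c j) p := by
  rw [← aeval_eq_eval, comp_aeval_apply]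
  simp only [aeval_eq_eval, eval_mul, eval_C, eval_X]

theorem eval_sum_C_mul_X [Fintype σ] (w c : σ → R) :
    eval c (∑ j, C (w j) * X j) = w ⬝ᵥ c := by
  simp only [map_sum, eval_mul, eval_C, eval_X, dotProduct]

end MvPolynomial

namespace Matrix

variable {R ι : Type*} [CommRing R] [Fintype ι] [DecidableEq ι]

theorem mulVec_eq_det_smul_sub_of_add_adjugate_mulVec {M : Matrix ι ι R} {a b c : ι → R}
    (hc : c + M.adjugate *ᵥ a = M.adjugate *ᵥ b) : M *ᵥ c = M.det • (b - a) := by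
  rw [eq_sub_of_add_eq hc, ← mulVec_sub, mulVec_mulVec, mul_adjugate, smul_mulVec,
    one_mulVec]

end Matrix

theorem explicit_local_inverse_general
    {R : Type*} [CommRing R] [HenselianLocalRing R] {n : ℕ}
    (f : Fin n → MvPolynomial (Fin n) R)
    (e : R) (he : e = (Matrix.of fun i j => eval (0 : Fin n → R) (pderiv j (f i))).det)
    (N : Matrix (Fin n) (Fin n) R)
    (hN : N = (Matrix.of fun i j => eval (0 : Fin n → R) (pderiv j (f i))).adjugate)
    (g : Fin n → MvPolynomial (Fin n) R)
    (hfe : ∀ i, aeval (fun j => C e * X j) (f i) =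
      C e * (∑ j, C (eval (0 : Fin n → R) (pderiv j (f i))) * X j) + C (e ^ 2) * g i)
    (h : Fin n → MvPolynomial (Fin n) R)
    (hh : ∀ i, h i = X i + ∑ j, C (N i j) * g j) :
    ∀ b : Fin n → R, (∀ i, b i ∈ maximalIdeal R) →
      ∀ c : Fin n → R, (∀ i, c i ∈ maximalIdeal R) →
        (∀ i, eval c (h i) = ∑ j, N i j * b j) →
        ∀ i, eval (fun j => e * c j) (f i) = e ^ 2 * b i := by
  intro b _ c _ hhc i
  set M : Matrix (Fin n) (Fin n) R := Matrix.of fun i j => eval 0 (pderiv j (f i))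
  set gc : Fin n → R := fun j => eval c (g j)
  have hc : c + N *ᵥ gc = N *ᵥ b := funext fun k => by
    have hk := hhc k
    simp only [hh, eval_add, eval_X, map_sum, eval_mul, eval_C] at hk
    exact hk
  have hMc : M *ᵥ c = e • (b - gc) := by
    rw [he]
    exact mulVec_eq_det_smul_sub_of_add_adjugate_mulVec (hN ▸ hc)
  have hfc : eval (fun j => e * c j) (f i) = e * (M *ᵥ c) i + e ^ 2 * gc i := by
    rw [← eval_aeval_C_mul_X, hfe, eval_add, eval_mul, eval_C, eval_sum_C_mul_X, eval_mul, eval_C]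
    rfl
  rw [hfc, hMc, Pi.smul_apply, Pi.sub_apply, smul_eq_mul]
  ring

/-- over a Henselian local domain, let `f(0) = 0`,
`e := J(0) ≠ 0`, `N = adj(M(0))`, and write `f(eX) = e·M(0)·X + e²·g(X)` with
`g` of order `≥ 2`. Then for every `b ∈ mⁿ`, any solution `c ∈ mⁿ` of
`h(c) = N·b` (where `h(X) = X + N·g(X)`; such `c` is unique by the multivariate
Hensel lemma) yields `x = e·c ∈ e·mⁿ` with `f(x) = e²·b`. -/
theorem explicit_local_inverse
    {R : Type*} [CommRing R] [IsDomain R] [HenselianLocalRing R] {n : ℕ}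
    (f : Fin n → MvPolynomial (Fin n) R)
    (hf0 : ∀ i, eval (0 : Fin n → R) (f i) = 0)
    (e : R) (he : e = (Matrix.of fun i j => eval (0 : Fin n → R) (pderiv j (f i))).det)
    (hne : e ≠ 0)
    (N : Matrix (Fin n) (Fin n) R)
    (hN : N = (Matrix.of fun i j => eval (0 : Fin n → R) (pderiv j (f i))).adjugate)
    (g : Fin n → MvPolynomial (Fin n) R)
    (hg : ∀ i, g i ∈ (Ideal.span (Set.range (X : Fin n → MvPolynomial (Fin n) R))) ^ 2)
    (hfe : ∀ i, aeval (fun j => C e * X j) (f i) =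
      C e * (∑ j, C (eval (0 : Fin n → R) (pderiv j (f i))) * X j) + C (e ^ 2) * g i)
    (h : Fin n → MvPolynomial (Fin n) R)
    (hh : ∀ i, h i = X i + ∑ j, C (N i j) * g j) :
    ∀ b : Fin n → R, (∀ i, b i ∈ maximalIdeal R) →
      ∀ c : Fin n → R, (∀ i, c i ∈ maximalIdeal R) →
        (∀ i, eval c (h i) = ∑ j, N i j * b j) →
        ∀ i, eval (fun j => e * c j) (f i) = e ^ 2 * b i :=
  explicit_local_inverse_general f e he N hN g hfe h hh
end
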